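/- (Comparison-problem test function, Section 4.5.) Let m : [−L/2, L/2] → ℝ be continuous, let −L/2 < y₁ < y₂ < L/2, let k̃ ≥ 0, and let M̃ : [y₁, y₂] → ℝ be continuous with M̃(y) < m(y) for every y ∈ [y₁, y₂]. Suppose ψ̃ : [y₁, y₂] → ℝ is twice continuously differentiable, not identically zero, with ψ̃(y₁) = ψ̃(y₂) = 0 and ψ̃″(y) − (k̃² + 1/L_d²)ψ̃(y) + κ₀² M̃(y)ψ̃(y) = 0 on [y₁, y₂]. Then ∫_{y₁}^{y₂} ( ψ̃′(y)² + (1/L_d² − κ₀² m(y)) ψ̃(y)² ) dy < −k̃² ∫_{y₁}^{y₂} ψ̃(y)² dy ≤ 0; in particular the extension of ψ̃ by zero to [−L/2, L/2] is an admissible test function whose Rayleigh quotient R_α(g) (formed with the profile m) is strictly negative. -/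
import Mathlib


open Set

noncomputable section

/-- An admissible test function `g` (with derivative data `g'`): continuous on the
channel, vanishing at the boundary, not identically zero, continuously differentiable
except at finitely many points, with bounded derivative. -/
def IsAdmissible (L : ℝ) (g g' : ℝ → ℝ) : Prop :=
  ContinuousOn g (Icc (-L/2) (L/2)) ∧
  g (-L/2) = 0 ∧ g (L/2) = 0 ∧
  (∃ y ∈ Icc (-L/2) (L/2), g y ≠ 0) ∧
  (∃ S : Finset ℝ,
    (∀ y ∈ Icc (-L/2) (L/2) \ (S : Set ℝ), HasDerivAt g (g' y) y) ∧
    ContinuousOn g' (Icc (-L/2) (L/2) \ (S : Set ℝ))) ∧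
  (∃ C : ℝ, ∀ y ∈ Icc (-L/2) (L/2), |g' y| ≤ C)

open intervalIntegral in
/-- The Rayleigh quotient `R_α(g)` formed with the reciprocal Rossby Mach number
profile `m`, where `κ₀² = π²/L² + 1/L_d²`. -/
noncomputable def Rayleigh (L Ld : ℝ) (m : ℝ → ℝ) (g g' : ℝ → ℝ) : ℝ :=
  (∫ y in (-L/2)..(L/2),
      (g' y ^ 2 + (1/Ld^2 - (Real.pi^2/L^2 + 1/Ld^2) * m y) * g y ^ 2)) /
  (∫ y in (-L/2)..(L/2), g y ^ 2)

open MeasureTheory in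
/-- Integral of a function extended by zero from `[b,c]` to `[a,d]`. -/
lemma aux_piecewise_integral {a b c d : ℝ} (h1 : a ≤ b) (h2 : b ≤ c) (h3 : c ≤ d)
    (f : ℝ → ℝ) (hf : ContinuousOn f (Icc b c)) :
    (∫ y in a..d, (if b ≤ y ∧ y ≤ c then f y else 0)) = ∫ y in b..c, f y := by
  set H : ℝ → ℝ := fun y => if b ≤ y ∧ y ≤ c then f y else 0 with hH
  have hmid_eq : EqOn H f (Icc b c) := fun y hy => if_pos (mem_Icc.mp hy)
  have hintf : IntervalIntegrable f volume b c := (uIcc_of_le h2 ▸ hf).intervalIntegrable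
  have hmid : IntervalIntegrable H volume b c := by
    rw [intervalIntegrable_iff_integrableOn_Ioc_of_le h2]
    exact ((intervalIntegrable_iff_integrableOn_Ioc_of_le h2).mp hintf).congr_fun
      (fun y hy => (hmid_eq (Ioc_subset_Icc_self hy)).symm) measurableSet_Ioc
  have hmidint : (∫ y in b..c, H y) = ∫ y in b..c, f y :=
    intervalIntegral.integral_congr (uIcc_of_le h2 ▸ hmid_eq)
  -- left piece
  have hb_ae : ∀ᵐ x : ℝ, x ≠ b := by
    rw [MeasureTheory.ae_iff]
    simp only [ne_eq, not_not, setOf_eq_eq_singleton]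
    exact Real.volume_singleton
  have hc_ae : ∀ᵐ x : ℝ, x ≠ c := by
    rw [MeasureTheory.ae_iff]
    simp only [ne_eq, not_not, setOf_eq_eq_singleton]
    exact Real.volume_singleton
  have hleft_ae : ∀ᵐ x : ℝ, x ∈ Ioc a b → H x = 0 := by
    filter_upwards [hb_ae] with x hxb hx
    have : ¬ (b ≤ x ∧ x ≤ c) := fun h => hxb (le_antisymm hx.2 h.1)
    simp [hH, this]
  have hright_ae : ∀ᵐ x : ℝ, x ∈ Ioc c d → H x = 0 := by
    filter_upwards with x hx
    have : ¬ (b ≤ x ∧ x ≤ c) := fun h => absurd hx.1 (not_lt.mpr h.2)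
    simp [hH, this]
  have hleft_int : IntervalIntegrable H volume a b := by
    rw [intervalIntegrable_iff_integrableOn_Ioc_of_le h1]
    have h' : H =ᵐ[MeasureTheory.volume.restrict (Ioc a b)] (fun _ => (0:ℝ)) :=
      (ae_restrict_iff' measurableSet_Ioc).mpr hleft_ae
    exact (integrable_zero _ _ _).congr h'.symm
  have hright_int : IntervalIntegrable H volume c d := by
    rw [intervalIntegrable_iff_integrableOn_Ioc_of_le h3]
    have h' : H =ᵐ[MeasureTheory.volume.restrict (Ioc c d)] (fun _ => (0:ℝ)) :=
      (ae_restrict_iff' measurableSet_Ioc).mpr hright_ae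
    exact (integrable_zero _ _ _).congr h'.symm
  have hleft0 : (∫ y in a..b, H y) = 0 := by
    rw [intervalIntegral.integral_congr_ae (g := fun _ => (0:ℝ))
      (by rw [uIoc_of_le h1]; exact hleft_ae)]
    simp
  have hright0 : (∫ y in c..d, H y) = 0 := by
    rw [intervalIntegral.integral_congr_ae (g := fun _ => (0:ℝ))
      (by rw [uIoc_of_le h3]; exact hright_ae)]
    simp
  have hsplit1 : (∫ y in a..b, H y) + (∫ y in b..c, H y) = ∫ y in a..c, H y :=
    intervalIntegral.integral_add_adjacent_intervals hleft_int hmid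
  have hsplit2 : (∫ y in a..c, H y) + (∫ y in c..d, H y) = ∫ y in a..d, H y :=
    intervalIntegral.integral_add_adjacent_intervals (hleft_int.trans hmid) hright_int
  calc (∫ y in a..d, H y) = (∫ y in a..b, H y) + (∫ y in b..c, H y) + (∫ y in c..d, H y) := by
        rw [hsplit1, hsplit2]
    _ = ∫ y in b..c, f y := by rw [hleft0, hright0, hmidint]; ring

open MeasureTheory in
open intervalIntegral in
/-- Comparison-problem test function (Section 4.5): a neutral mode `ψ̃` of the comparison
problem on `[y₁, y₂]` with profile `M̃ < m` gives
`∫ (ψ̃'² + (1/L_d² − κ₀² m) ψ̃²) < −k̃² ∫ ψ̃² ≤ 0`; in particular its extension by zero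
is an admissible test function with strictly negative Rayleigh quotient. -/
theorem comparison_test_function
    (L Ld : ℝ) (hL : 0 < L) (hLd : 0 < Ld)
    (m : ℝ → ℝ) (hmcont : ContinuousOn m (Icc (-L/2) (L/2)))
    (y₁ y₂ : ℝ) (hy₁ : -L/2 < y₁) (hy : y₁ < y₂) (hy₂ : y₂ < L/2)
    (kt : ℝ) (hkt : 0 ≤ kt)
    (Mt : ℝ → ℝ) (hMtcont : ContinuousOn Mt (Icc y₁ y₂))
    (hMt : ∀ y ∈ Icc y₁ y₂, Mt y < m y)
    (ψt ψt' ψt'' : ℝ → ℝ)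
    (hd1 : ∀ y ∈ Icc y₁ y₂, HasDerivAt ψt (ψt' y) y)
    (hd2 : ∀ y ∈ Icc y₁ y₂, HasDerivAt ψt' (ψt'' y) y)
    (hd2c : ContinuousOn ψt'' (Icc y₁ y₂))
    (hne : ∃ y ∈ Icc y₁ y₂, ψt y ≠ 0)
    (hb1 : ψt y₁ = 0) (hb2 : ψt y₂ = 0)
    (heq : ∀ y ∈ Icc y₁ y₂,
      ψt'' y - (kt^2 + 1/Ld^2) * ψt y + (Real.pi^2/L^2 + 1/Ld^2) * Mt y * ψt y = 0) :
    (∫ y in y₁..y₂,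
        (ψt' y ^ 2 + (1/Ld^2 - (Real.pi^2/L^2 + 1/Ld^2) * m y) * ψt y ^ 2))
      < -kt^2 * ∫ y in y₁..y₂, ψt y ^ 2 ∧
    -kt^2 * (∫ y in y₁..y₂, ψt y ^ 2) ≤ 0 ∧
    IsAdmissible L (fun y => if y₁ ≤ y ∧ y ≤ y₂ then ψt y else 0)
      (fun y => if y₁ ≤ y ∧ y ≤ y₂ then ψt' y else 0) ∧
    Rayleigh L Ld m (fun y => if y₁ ≤ y ∧ y ≤ y₂ then ψt y else 0)
      (fun y => if y₁ ≤ y ∧ y ≤ y₂ then ψt' y else 0) < 0 := by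
  have hy12 : y₁ ≤ y₂ := hy.le
  have huIcc : uIcc y₁ y₂ = Icc y₁ y₂ := uIcc_of_le hy12
  have hκ : (0:ℝ) < Real.pi^2/L^2 + 1/Ld^2 := by positivity
  set κ : ℝ := Real.pi^2/L^2 + 1/Ld^2 with hκdef
  -- continuity
  have hψc : ContinuousOn ψt (Icc y₁ y₂) := fun y hyy =>
    ((hd1 y hyy).continuousAt).continuousWithinAt
  have hψ'c : ContinuousOn ψt' (Icc y₁ y₂) := fun y hyy =>
    ((hd2 y hyy).continuousAt).continuousWithinAt
  have hmc' : ContinuousOn m (Icc y₁ y₂) := hmcont.mono (Icc_subset_Icc hy₁.le hy₂.le)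
  -- integrability
  have hint_ψ' : IntervalIntegrable ψt' volume y₁ y₂ :=
    (huIcc ▸ hψ'c).intervalIntegrable
  have hint_ψ'' : IntervalIntegrable ψt'' volume y₁ y₂ :=
    (huIcc ▸ hd2c).intervalIntegrable
  have hFcont : ContinuousOn
      (fun y => ψt' y ^ 2 + (1/Ld^2 - κ * m y) * ψt y ^ 2) (Icc y₁ y₂) :=
    (hψ'c.pow 2).add (((continuousOn_const.sub (continuousOn_const.mul hmc'))).mul (hψc.pow 2))
  have hint_F : IntervalIntegrable
      (fun y => ψt' y ^ 2 + (1/Ld^2 - κ * m y) * ψt y ^ 2) volume y₁ y₂ :=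
    (huIcc ▸ hFcont).intervalIntegrable
  have hψsqc : ContinuousOn (fun y => ψt y ^ 2) (Icc y₁ y₂) := hψc.pow 2
  have hint_ψsq : IntervalIntegrable (fun y => ψt y ^ 2) volume y₁ y₂ :=
    (huIcc ▸ hψsqc).intervalIntegrable
  -- integration by parts
  have hibp : ∫ y in y₁..y₂, (ψt' y * ψt' y + ψt y * ψt'' y)
      = ψt y₂ * ψt' y₂ - ψt y₁ * ψt' y₁ :=
    intervalIntegral.integral_deriv_mul_eq_sub
      (fun x hx => hd1 x (huIcc ▸ hx)) (fun x hx => hd2 x (huIcc ▸ hx)) hint_ψ' hint_ψ''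
  rw [hb1, hb2] at hibp
  simp only [zero_mul, sub_zero] at hibp
  -- pointwise identity
  have hptwise : EqOn
      (fun y => ψt' y ^ 2 + (1/Ld^2 - κ * m y) * ψt y ^ 2 + kt^2 * ψt y ^ 2)
      (fun y => κ * ((Mt y - m y) * ψt y ^ 2) + (ψt' y * ψt' y + ψt y * ψt'' y))
      (uIcc y₁ y₂) := by
    rw [huIcc]
    intro y hyy
    have h := heq y hyy
    simp only
    linear_combination (-(ψt y)) * h
  have hint_MM : IntervalIntegrable (fun y => (Mt y - m y) * ψt y ^ 2) volume y₁ y₂ :=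
    (huIcc ▸ ((hMtcont.sub hmc').mul hψsqc)).intervalIntegrable
  have hint_ibp : IntervalIntegrable (fun y => ψt' y * ψt' y + ψt y * ψt'' y) volume y₁ y₂ :=
    (huIcc ▸ ((hψ'c.mul hψ'c).add (hψc.mul hd2c))).intervalIntegrable
  have hcongr := intervalIntegral.integral_congr (μ := volume) hptwise
  rw [intervalIntegral.integral_add (hint_F) (hint_ψsq.const_mul _),
      intervalIntegral.integral_add (hint_MM.const_mul κ) hint_ibp,
      intervalIntegral.integral_const_mul, intervalIntegral.integral_const_mul, hibp,
      add_zero] at hcongr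
  -- strict positivity of ∫ (m - Mt) ψ²
  have hpos : 0 < ∫ y in y₁..y₂, (m y - Mt y) * ψt y ^ 2 := by
    apply intervalIntegral.integral_pos hy ((hmc'.sub hMtcont).mul hψsqc)
    · intro x hx
      have hx' : x ∈ Icc y₁ y₂ := Ioc_subset_Icc_self hx
      exact mul_nonneg (sub_nonneg.mpr (hMt x hx').le) (sq_nonneg _)
    · obtain ⟨c, hc, hcne⟩ := hne
      exact ⟨c, hc, mul_pos (sub_pos.mpr (hMt c hc)) (pow_two_pos_of_ne_zero hcne)⟩
  have hMMint : (∫ y in y₁..y₂, (Mt y - m y) * ψt y ^ 2)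
      = -∫ y in y₁..y₂, (m y - Mt y) * ψt y ^ 2 := by
    rw [← intervalIntegral.integral_neg]
    congr 1; funext y; ring
  rw [hMMint, mul_neg] at hcongr
  have hmain : (∫ y in y₁..y₂, (ψt' y ^ 2 + (1/Ld^2 - κ * m y) * ψt y ^ 2))
      < -kt^2 * ∫ y in y₁..y₂, ψt y ^ 2 := by
    have hA : (∫ y in y₁..y₂, (ψt' y ^ 2 + (1/Ld^2 - κ * m y) * ψt y ^ 2))
        = -(κ * ∫ y in y₁..y₂, (m y - Mt y) * ψt y ^ 2) - kt^2 * ∫ y in y₁..y₂, ψt y ^ 2 := by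
      linear_combination hcongr
    rw [hA]
    have hp := mul_pos hκ hpos
    linarith
  have hψsqnn : 0 ≤ ∫ y in y₁..y₂, ψt y ^ 2 :=
    intervalIntegral.integral_nonneg hy12 (fun u _ => sq_nonneg _)
  have hsecond : -kt^2 * (∫ y in y₁..y₂, ψt y ^ 2) ≤ 0 :=
    mul_nonpos_of_nonpos_of_nonneg (neg_nonpos.mpr (sq_nonneg kt)) hψsqnn
  obtain ⟨c, hc, hcne⟩ := hne
  set g : ℝ → ℝ := fun y => if y₁ ≤ y ∧ y ≤ y₂ then ψt y else 0 with hg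
  set gd : ℝ → ℝ := fun y => if y₁ ≤ y ∧ y ≤ y₂ then ψt' y else 0 with hgd
  have hg_lt : ∀ x : ℝ, x < y₁ → g x = 0 := fun x hx =>
    if_neg (fun h => absurd h.1 (not_le.mpr hx))
  have hg_gt : ∀ x : ℝ, y₂ < x → g x = 0 := fun x hx =>
    if_neg (fun h => absurd h.2 (not_le.mpr hx))
  have hg_mem : ∀ x ∈ Icc y₁ y₂, g x = ψt x := fun x hx => if_pos (mem_Icc.mp hx)
  have hgd_lt : ∀ x : ℝ, x < y₁ → gd x = 0 := fun x hx =>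
    if_neg (fun h => absurd h.1 (not_le.mpr hx))
  have hgd_gt : ∀ x : ℝ, y₂ < x → gd x = 0 := fun x hx =>
    if_neg (fun h => absurd h.2 (not_le.mpr hx))
  have hgd_mem : ∀ x ∈ Icc y₁ y₂, gd x = ψt' x := fun x hx => if_pos (mem_Icc.mp hx)
  -- continuity of g at endpoints by squeeze
  have hat : ∀ x : ℝ, x ∈ ({y₁, y₂} : Set ℝ) → ContinuousAt g x := by
    intro x hx
    have hxI : x ∈ Icc y₁ y₂ := by
      rcases hx with rfl | rfl
      · exact left_mem_Icc.mpr hy12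
      · exact right_mem_Icc.mpr hy12
    have hψx : ψt x = 0 := by rcases hx with rfl | rfl <;> assumption
    have hgx : g x = 0 := by rw [hg_mem x hxI, hψx]
    have hten : Filter.Tendsto g (nhds x) (nhds 0) := by
      apply squeeze_zero_norm (a := fun t => |ψt t|)
      · intro t
        by_cases h : y₁ ≤ t ∧ t ≤ y₂ <;> simp [hg, h, Real.norm_eq_abs, abs_nonneg]
      · have habs : ContinuousAt (fun t => |ψt t|) x := ((hd1 x hxI).continuousAt).abs
        simpa [hψx] using habs.tendsto
    rw [ContinuousAt, hgx]
    exact hten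
  have hgc : ∀ x : ℝ, ContinuousAt g x := by
    intro x
    rcases lt_trichotomy x y₁ with h1 | h1 | h1
    · exact continuousAt_const.congr (by
        filter_upwards [Iio_mem_nhds h1] with t ht using (hg_lt t ht).symm)
    · exact hat x (Or.inl h1)
    · rcases lt_trichotomy x y₂ with h2 | h2 | h2
      · refine ((hd1 x ⟨h1.le, h2.le⟩).continuousAt).congr ?_
        filter_upwards [isOpen_Ioo.mem_nhds (⟨h1, h2⟩ : x ∈ Ioo y₁ y₂)] with t ht
        exact (hg_mem t (Ioo_subset_Icc_self ht)).symm
      · exact hat x (Or.inr h2)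
      · exact continuousAt_const.congr (by
          filter_upwards [Ioi_mem_nhds h2] with t ht using (hg_gt t ht).symm)
  have hadm : IsAdmissible L g gd := by
    refine ⟨fun x _ => (hgc x).continuousWithinAt, hg_lt _ hy₁, hg_gt _ hy₂,
      ⟨c, Icc_subset_Icc hy₁.le hy₂.le hc, by rw [hg_mem c hc]; exact hcne⟩,
      ⟨({y₁, y₂} : Finset ℝ), ?_, ?_⟩, ?_⟩
    · intro y hyd
      have hy1' : y ≠ y₁ := by
        intro h; exact hyd.2 (by simp [h])
      have hy2' : y ≠ y₂ := by
        intro h; exact hyd.2 (by simp [h])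
      rcases lt_trichotomy y y₁ with h1 | h1 | h1
      · have h0 : HasDerivAt g 0 y :=
          (hasDerivAt_const y 0).congr_of_eventuallyEq (by
            filter_upwards [Iio_mem_nhds h1] with t ht using hg_lt t ht)
        rwa [hgd_lt y h1]
      · exact absurd h1 hy1'
      · rcases lt_trichotomy y y₂ with h2 | h2 | h2
        · have hmem : y ∈ Icc y₁ y₂ := ⟨h1.le, h2.le⟩
          have h0 : HasDerivAt g (ψt' y) y :=
            (hd1 y hmem).congr_of_eventuallyEq (by
              filter_upwards [isOpen_Ioo.mem_nhds (⟨h1, h2⟩ : y ∈ Ioo y₁ y₂)] with t ht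
              exact hg_mem t (Ioo_subset_Icc_self ht))
          rwa [hgd_mem y hmem]
        · exact absurd h2 hy2'
        · have h0 : HasDerivAt g 0 y :=
            (hasDerivAt_const y 0).congr_of_eventuallyEq (by
              filter_upwards [Ioi_mem_nhds h2] with t ht using hg_gt t ht)
          rwa [hgd_gt y h2]
    · intro y hyd
      have hy1' : y ≠ y₁ := by
        intro h; exact hyd.2 (by simp [h])
      have hy2' : y ≠ y₂ := by
        intro h; exact hyd.2 (by simp [h])
      apply ContinuousAt.continuousWithinAt
      rcases lt_trichotomy y y₁ with h1 | h1 | h1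
      · exact continuousAt_const.congr (by
          filter_upwards [Iio_mem_nhds h1] with t ht using (hgd_lt t ht).symm)
      · exact absurd h1 hy1'
      · rcases lt_trichotomy y y₂ with h2 | h2 | h2
        · refine ((hd2 y ⟨h1.le, h2.le⟩).continuousAt).congr ?_
          filter_upwards [isOpen_Ioo.mem_nhds (⟨h1, h2⟩ : y ∈ Ioo y₁ y₂)] with t ht
          exact (hgd_mem t (Ioo_subset_Icc_self ht)).symm
        · exact absurd h2 hy2'
        · exact continuousAt_const.congr (by
            filter_upwards [Ioi_mem_nhds h2] with t ht using (hgd_gt t ht).symm)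
    · obtain ⟨C, hC⟩ := isCompact_Icc.exists_bound_of_continuousOn hψ'c
      refine ⟨max C 0, fun y _ => ?_⟩
      by_cases h : y₁ ≤ y ∧ y ≤ y₂
      · have := hC y (mem_Icc.mpr h)
        rw [Real.norm_eq_abs] at this
        calc |gd y| = |ψt' y| := by rw [hgd_mem y (mem_Icc.mpr h)]
          _ ≤ C := this
          _ ≤ max C 0 := le_max_left _ _
      · have : gd y = 0 := if_neg h
        rw [this, abs_zero]
        exact le_max_right _ _
  refine ⟨hmain, hsecond, hadm, ?_⟩
  -- Rayleigh quotient
  have hnum_eq : (∫ y in (-L/2)..(L/2), (gd y ^ 2 + (1/Ld^2 - κ * m y) * g y ^ 2))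
      = ∫ y in y₁..y₂, (ψt' y ^ 2 + (1/Ld^2 - κ * m y) * ψt y ^ 2) := by
    have hfun : (fun y => gd y ^ 2 + (1/Ld^2 - κ * m y) * g y ^ 2)
        = fun y => if y₁ ≤ y ∧ y ≤ y₂
            then (ψt' y ^ 2 + (1/Ld^2 - κ * m y) * ψt y ^ 2) else 0 := by
      funext t
      by_cases h : y₁ ≤ t ∧ t ≤ y₂ <;> simp [hg, hgd, h]
    rw [hfun]
    exact aux_piecewise_integral hy₁.le hy12 hy₂.le _ hFcont
  have hden_eq : (∫ y in (-L/2)..(L/2), g y ^ 2) = ∫ y in y₁..y₂, ψt y ^ 2 := by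
    have hfun : (fun y => g y ^ 2)
        = fun y => if y₁ ≤ y ∧ y ≤ y₂ then ψt y ^ 2 else 0 := by
      funext t
      by_cases h : y₁ ≤ t ∧ t ≤ y₂ <;> simp [hg, h]
    rw [hfun]
    exact aux_piecewise_integral hy₁.le hy12 hy₂.le _ hψsqc
  have hden_pos : 0 < ∫ y in y₁..y₂, ψt y ^ 2 :=
    intervalIntegral.integral_pos hy hψsqc (fun x _ => sq_nonneg _)
      ⟨c, hc, pow_two_pos_of_ne_zero hcne⟩
  have hnum_neg : (∫ y in (-L/2)..(L/2), (gd y ^ 2 + (1/Ld^2 - κ * m y) * g y ^ 2)) < 0 := by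
    rw [hnum_eq]
    exact hmain.trans_le hsecond
  show (∫ y in (-L/2)..(L/2), (gd y ^ 2 + (1/Ld^2 - κ * m y) * g y ^ 2))
      / (∫ y in (-L/2)..(L/2), g y ^ 2) < 0
  rw [hden_eq]
  exact div_neg_of_neg_of_pos hnum_neg hden_pos
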